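/- arXiv:1912.08526 — 3 statements merged into one kernel-verified Lean document; each statement's English description precedes it below -/
import Mathlib

section
/- Let N, d ≥ 1, let J ∈ ℝ^{N×d} be such that J·Jᵀ is invertible, let Y, ŷ₀ ∈ ℝ^N, θ₀ ∈ ℝ^d and η > 0. Then the function θ : ℝ → ℝ^d defined by θ(t) = θ₀ − Jᵀ·(J·Jᵀ)⁻¹·(I − exp(−(η/N)·t·J·Jᵀ))·(ŷ₀ − Y) satisfies θ(0) = θ₀ and, for every t ∈ ℝ, θ'(t) = −(η/N)·Jᵀ·(ŷ₀ + J·(θ(t) − θ₀) − Y). -/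
/-!
With `A = J Jᵀ` and `E t = exp (-(η/N) t A) (ŷ₀ - Y)`, the closed form reads
`θ t = θ₀ - Jᵀ A⁻¹ (ŷ₀ - Y) + Jᵀ A⁻¹ E t`. Since `Jᵀ A⁻¹` is a right inverse of `J`, the residual
`ŷ₀ + J (θ t - θ₀) - Y` equals `E t`; and `E' = -(η/N) A E`, so `θ' = -(η/N) Jᵀ A⁻¹ A E t`,
which is `-(η/N) Jᵀ` applied to the residual.
-/

open Matrix NormedSpace

theorem HasDerivAt.const_mulVec {𝕜 : Type*} [NontriviallyNormedField 𝕜] [CompleteSpace 𝕜]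
    {m n : Type*} [Fintype m] [Fintype n]
    (B : Matrix m n 𝕜) {f : 𝕜 → n → 𝕜} {f' : n → 𝕜} {t : 𝕜} (hf : HasDerivAt f f' t) :
    HasDerivAt (fun s => B *ᵥ f s) (B *ᵥ f') t :=
  (mulVecLin B).toContinuousLinearMap.hasFDerivAt.comp_hasDerivAt t hf

section

-- Any matrix norm would do: all of them induce the product topology, which is all `exp` sees.
attribute [local instance] Matrix.linftyOpNormedRing Matrix.linftyOpNormedAlgebra

theorem Matrix.hasDerivAt_exp_smul_mulVec {𝕂 : Type*} [RCLike 𝕂] {n : Type*} [Fintype n]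
    [DecidableEq n] (A : Matrix n n 𝕂) (v : n → 𝕂) (t : 𝕂) :
    HasDerivAt (fun s : 𝕂 => exp (s • A) *ᵥ v) (A *ᵥ (exp (t • A) *ᵥ v)) t := by
  rw [mulVec_mulVec]
  exact ((mulVecBilin 𝕂 𝕂).flip v).toContinuousLinearMap.hasFDerivAt.comp_hasDerivAt t
    (hasDerivAt_exp_smul_const' A t)

end

theorem lazy_weight_evolution_general
    (N d : ℕ)
    (J : Matrix (Fin N) (Fin d) ℝ) (hJ : IsUnit (J * Jᵀ).det)
    (Y y0 : Fin N → ℝ) (θ0 : Fin d → ℝ) (η : ℝ)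
    (θ : ℝ → Fin d → ℝ)
    (hθ : ∀ t, θ t =
      θ0 - Jᵀ.mulVec ((J * Jᵀ)⁻¹.mulVec
        (((1 : Matrix (Fin N) (Fin N) ℝ)
            - exp ((-(η / N) * t) • (J * Jᵀ))).mulVec (y0 - Y)))) :
    θ 0 = θ0 ∧
      ∀ t : ℝ, HasDerivAt θ
        (-(η / N) • Jᵀ.mulVec (y0 + J.mulVec (θ t - θ0) - Y)) t := by
  set A := J * Jᵀ
  set c := -(η / N)
  set E : ℝ → Fin N → ℝ := fun s => exp ((c * s) • A) *ᵥ (y0 - Y)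
  have hθE : ∀ s, θ s = θ0 - Jᵀ *ᵥ (A⁻¹ *ᵥ (y0 - Y)) + Jᵀ *ᵥ (A⁻¹ *ᵥ E s) := fun s => by
    rw [hθ s, sub_mulVec, one_mulVec, mulVec_sub, mulVec_sub]
    abel
  have hright_inv : ∀ w, J *ᵥ (Jᵀ *ᵥ (A⁻¹ *ᵥ w)) = w := fun w => by
    rw [mulVec_mulVec, mulVec_mulVec, mul_nonsing_inv A hJ, one_mulVec]
  have hresidual : ∀ t, y0 + J *ᵥ (θ t - θ0) - Y = E t := fun t => by
    have hdisp : θ t - θ0 = Jᵀ *ᵥ (A⁻¹ *ᵥ (E t - (y0 - Y))) := by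
      rw [hθE, mulVec_sub A⁻¹ (E t), mulVec_sub Jᵀ]
      abel
    rw [hdisp, hright_inv]
    abel
  refine ⟨by simp [hθ], fun t => ?_⟩
  have hEt : HasDerivAt E (c • (A *ᵥ E t)) t :=
    (hasDerivAt_exp_smul_mulVec A (y0 - Y) (c * t)).scomp t (hasDerivAt_const_mul c)
  rw [hresidual, funext hθE]
  refine (((hEt.const_mulVec A⁻¹).const_mulVec Jᵀ).const_add _).congr_deriv ?_
  rw [mulVec_smul, mulVec_mulVec, nonsing_inv_mul A hJ, one_mulVec, mulVec_smul]

/-- Closed-form solution of the lazy-regime weight evolution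
`∂_t θ_t = −(η/N)·Jᵀ·(ŷ₀ + J·(θ_t − θ₀) − Y)` for the linearized network. -/
theorem lazy_weight_evolution
    (N d : ℕ) (hN : 1 ≤ N) (hd : 1 ≤ d)
    (J : Matrix (Fin N) (Fin d) ℝ) (hJ : IsUnit (J * Jᵀ).det)
    (Y y0 : Fin N → ℝ) (θ0 : Fin d → ℝ) (η : ℝ) (hη : 0 < η)
    (θ : ℝ → Fin d → ℝ)
    (hθ : ∀ t, θ t =
      θ0 - Jᵀ.mulVec ((J * Jᵀ)⁻¹.mulVec
        (((1 : Matrix (Fin N) (Fin N) ℝ)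
            - exp ((-(η / N) * t) • (J * Jᵀ))).mulVec (y0 - Y)))) :
    θ 0 = θ0 ∧
      ∀ t : ℝ, HasDerivAt θ
        (-(η / N) • Jᵀ.mulVec (y0 + J.mulVec (θ t - θ0) - Y)) t :=
  lazy_weight_evolution_general N d J hJ Y y0 θ0 η θ hθ
end

section
/- Let N ≥ 1, let Θ₀ ∈ ℝ^{N×N} be a symmetric matrix with orthonormal eigenvectors v₁,…,v_N ∈ ℝ^N and corresponding real eigenvalues λ₁,…,λ_N, let Y, ŷ₀ ∈ ℝ^N, η > 0, and let ŷ(t) = (I − exp(−(η/N)·t·Θ₀))·Y + exp(−(η/N)·t·Θ₀)·ŷ₀. Then for every t ≥ 0, ‖ŷ(t) − Y‖₂² = Σ_{i=1}^N e^{−2(η/N)λ_i t}·(v_iᵀ(ŷ₀ − Y))². -/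
/-!
Along each eigenvector `vᵢ` of the symmetric kernel `Θ`, the matrix exponential
`E = exp (-(η/N) t Θ)` acts as multiplication by `e^{-(η/N) λᵢ t}`, and `E` is symmetric.
The error `ŷ(t) - Y = E (ŷ₀ - Y)` therefore has coordinates `e^{-(η/N) λᵢ t} vᵢᵀ (ŷ₀ - Y)` in
the orthonormal basis `(vᵢ)`, and Parseval's identity gives the squared norm.
-/

open Matrix NormedSpace Finset

namespace Matrix

variable {m R : Type*} [Fintype m]

theorem pow_mulVec_of_mulVec_eq_smul [DecidableEq m] [CommSemiring R] {A : Matrix m m R}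
    {w : m → R} {μ : R} (h : A *ᵥ w = μ • w) (k : ℕ) : (A ^ k) *ᵥ w = μ ^ k • w := by
  induction k with
  | zero => simp
  | succ k ih => rw [pow_succ', ← mulVec_mulVec, ih, mulVec_smul, h, smul_smul, pow_succ]

theorem exp_mulVec_of_mulVec_eq_smul [DecidableEq m] {𝕂 : Type*} [RCLike 𝕂] {A : Matrix m m 𝕂}
    {w : m → 𝕂} {μ : 𝕂} (h : A *ᵥ w = μ • w) : exp A *ᵥ w = exp μ • w := by
  -- matrices carry no global norm; the exponential series is summed in the operator norm
  open scoped Norms.Operator in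
  have hseries := (exp_series_hasSum_exp' (𝕂 := 𝕂) A).mapL
    (LinearMap.toContinuousLinearMap ((mulVecBilin 𝕂 𝕂).flip w))
  refine hseries.unique ?_
  simpa [smul_mulVec, pow_mulVec_of_mulVec_eq_smul h, smul_smul] using
    (exp_series_hasSum_exp' (𝕂 := 𝕂) μ).smul_const w

theorem dotProduct_mulVec_of_isSymm_of_mulVec_eq_smul [CommSemiring R] {A : Matrix m m R}
    (hA : A.IsSymm) {v : m → R} {μ : R} (h : A *ᵥ v = μ • v) (w : m → R) :
    v ⬝ᵥ (A *ᵥ w) = μ * (v ⬝ᵥ w) := by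
  rw [dotProduct_mulVec, ← mulVec_transpose, hA, h, smul_dotProduct, smul_eq_mul]

theorem sum_dotProduct_sq_of_orthonormal [DecidableEq m] [CommRing R] {v : m → m → R}
    (hv : ∀ i j, v i ⬝ᵥ v j = if i = j then 1 else 0) (w : m → R) :
    ∑ i, (v i ⬝ᵥ w) ^ 2 = ∑ i, w i ^ 2 := by
  have hB : of v * (of v)ᵀ = 1 := by
    ext i j
    rw [mul_apply', one_apply]
    exact hv i j
  have hBtB : (of v)ᵀ * of v = 1 := mul_eq_one_comm.mp hB
  calc ∑ i, (v i ⬝ᵥ w) ^ 2 = (of v *ᵥ w) ⬝ᵥ (of v *ᵥ w) := by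
        simp only [dotProduct, sq]
        rfl
    _ = w ⬝ᵥ w := by
        rw [dotProduct_mulVec, ← mulVec_transpose, mulVec_mulVec, hBtB, one_mulVec]
    _ = ∑ i, w i ^ 2 := by simp only [dotProduct, sq]

end Matrix

theorem convergence_speed_general
    (N : ℕ) (Θ : Matrix (Fin N) (Fin N) ℝ) (hΘ : Θ.IsSymm)
    (v : Fin N → Fin N → ℝ) (lam : Fin N → ℝ)
    (hev : ∀ i, Θ.mulVec (v i) = lam i • v i)
    (horth : ∀ i j, v i ⬝ᵥ v j = if i = j then (1 : ℝ) else 0)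
    (Y y0 : Fin N → ℝ) (η : ℝ)
    (yhat : ℝ → Fin N → ℝ)
    (hyhat : ∀ t, yhat t =
      ((1 : Matrix (Fin N) (Fin N) ℝ)
          - NormedSpace.exp ((-(η / N) * t) • Θ)).mulVec Y
        + (NormedSpace.exp ((-(η / N) * t) • Θ)).mulVec y0) :
    ∀ t : ℝ, 0 ≤ t →
      ∑ i, (yhat t i - Y i) ^ 2
        = ∑ i, Real.exp (-2 * (η / N) * lam i * t) * (v i ⬝ᵥ (y0 - Y)) ^ 2 := by
  intro t _
  set E := exp ((-(η / N) * t) • Θ)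
  have hE : E.IsSymm := (hΘ.smul _).exp
  have hEv (i : Fin N) : E *ᵥ v i = Real.exp (-(η / N) * t * lam i) • v i := by
    rw [Real.exp_eq_exp_ℝ]
    exact exp_mulVec_of_mulVec_eq_smul (by rw [smul_mulVec, hev, smul_smul])
  have herr : yhat t - Y = E *ᵥ (y0 - Y) := by
    rw [hyhat, sub_mulVec, one_mulVec, mulVec_sub]
    abel
  calc ∑ i, (yhat t i - Y i) ^ 2 = ∑ i, (v i ⬝ᵥ (E *ᵥ (y0 - Y))) ^ 2 := by
        rw [sum_dotProduct_sq_of_orthonormal horth, ← herr]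
        rfl
    _ = ∑ i, Real.exp (-2 * (η / N) * lam i * t) * (v i ⬝ᵥ (y0 - Y)) ^ 2 := by
        refine sum_congr rfl fun i _ => ?_
        rw [dotProduct_mulVec_of_isSymm_of_mulVec_eq_smul hE (hEv i), mul_pow, sq (Real.exp _),
          ← Real.exp_add]
        ring_nf

/-- Convergence speed of the training error in the lazy regime: the squared
Euclidean training error decomposes along the eigendirections of the NTK. -/
theorem convergence_speed
    (N : ℕ) (hN : 1 ≤ N) (Θ : Matrix (Fin N) (Fin N) ℝ) (hΘ : Θ.IsSymm)
    (v : Fin N → Fin N → ℝ) (lam : Fin N → ℝ)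
    (hev : ∀ i, Θ.mulVec (v i) = lam i • v i)
    (horth : ∀ i j, v i ⬝ᵥ v j = if i = j then (1 : ℝ) else 0)
    (Y y0 : Fin N → ℝ) (η : ℝ) (hη : 0 < η)
    (yhat : ℝ → Fin N → ℝ)
    (hyhat : ∀ t, yhat t =
      ((1 : Matrix (Fin N) (Fin N) ℝ)
          - NormedSpace.exp ((-(η / N) * t) • Θ)).mulVec Y
        + (NormedSpace.exp ((-(η / N) * t) • Θ)).mulVec y0) :
    ∀ t : ℝ, 0 ≤ t →
      ∑ i, (yhat t i - Y i) ^ 2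
        = ∑ i, Real.exp (-2 * (η / N) * lam i * t) * (v i ⬝ᵥ (y0 - Y)) ^ 2 :=
  convergence_speed_general N Θ hΘ v lam hev horth Y y0 η yhat hyhat
end

section
/- Let N ≥ 1, let Θ₀ ∈ ℝ^{N×N} be a symmetric positive semidefinite matrix, let λ > 0, Y, ŷ₀ ∈ ℝ^N, η > 0, and let ŷ(t) = exp(−(η/N)·t·(Θ₀ + λI))·ŷ₀ + (I − exp(−(η/N)·t·(Θ₀ + λI)))·(Θ₀ + λI)⁻¹·(Θ₀·Y + λ·ŷ₀). Then ŷ(t) converges as t → ∞ to (Θ₀ + λI)⁻¹·(Θ₀·Y + λ·ŷ₀); in particular the regularized training output does not converge to the labels Y but to a smoothed solution. -/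
/-!
`A = Θ₀ + λI` is positive definite, so its spectrum lies in `(0, ∞)`. By the continuous
functional calculus `exp (-t • A) = cfc (x ↦ e^{-t x}) A`, and on the compact spectrum these
functions decrease pointwise to `0`, hence uniformly by Dini's theorem; so `exp (-t • A) → 0`.
The output is the affine combination `E ŷ₀ + (1 - E) v` with `E = exp (-(η/N) t • A)`, which
therefore tends to `v`.
-/

open Matrix NormedSpace Filter Topology

section ContinuousFunctionalCalculus

variable {A : Type*} [NormedRing A] [StarRing A] [NormedAlgebra ℝ A] [StarModule ℝ A]
  [ContinuousFunctionalCalculus ℝ A IsSelfAdjoint] {a : A}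

lemma IsSelfAdjoint.exp_smul_eq_cfc (ha : IsSelfAdjoint a) (s : ℝ) :
    NormedSpace.exp (s • a) = cfc (fun x => Real.exp (s * x)) a := by
  rw [cfc_comp_const_mul s Real.exp a, CFC.real_exp_eq_normedSpace_exp (.smul (.all s) ha)]

theorem IsSelfAdjoint.tendsto_exp_neg_smul_atTop_zero (ha : IsSelfAdjoint a)
    (hpos : ∀ x ∈ spectrum ℝ a, 0 < x) :
    Tendsto (fun t : ℝ => NormedSpace.exp (-t • a)) atTop (𝓝 0) := by
  have hdecay : TendstoUniformlyOn (fun t x => Real.exp (-t * x)) 0 atTop (spectrum ℝ a) :=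
    Antitone.tendstoUniformlyOn_of_forall_tendsto
      (ContinuousFunctionalCalculus.isCompact_spectrum a)
      (fun t => by fun_prop)
      (fun x hx s t hst => Real.exp_le_exp.2 (by nlinarith [hpos x hx]))
      continuousOn_const
      (fun x hx => Real.tendsto_exp_atBot.comp
        (tendsto_neg_atTop_atBot.atBot_mul_const (hpos x hx)))
  simpa only [ha.exp_smul_eq_cfc, cfc_zero] using
    tendsto_cfc_fun hdecay (.of_forall fun t => by fun_prop)

end ContinuousFunctionalCalculus

theorem Filter.Tendsto.mulVec_add_one_sub_mulVec {n R α : Type*} [Fintype n] [DecidableEq n]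
    [Ring R] [TopologicalSpace R] [IsTopologicalRing R] {l : Filter α} {M : α → Matrix n n R}
    (hM : Tendsto M l (𝓝 0)) (u v : n → R) :
    Tendsto (fun t => M t *ᵥ u + (1 - M t) *ᵥ v) l (𝓝 v) := by
  have hcont : Continuous fun M : Matrix n n R => M *ᵥ u + (1 - M) *ᵥ v := by fun_prop
  simpa only [Function.comp_def, zero_mulVec, sub_zero, one_mulVec, zero_add] using
    (hcont.tendsto 0).comp hM

-- Any norm inducing the entrywise topology would do: it only makes matrices a normed ring.
open scoped Matrix.Norms.L2Operator in
theorem Matrix.PosDef.tendsto_exp_neg_smul_atTop_zero {n : Type*} [Fintype n] [DecidableEq n]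
    {A : Matrix n n ℝ} (hA : A.PosDef) :
    Tendsto (fun t : ℝ => exp (-t • A)) atTop (𝓝 0) :=
  IsSelfAdjoint.tendsto_exp_neg_smul_atTop_zero hA.isHermitian.isSelfAdjoint fun x hx => by
    obtain ⟨i, rfl⟩ := hA.isHermitian.spectrum_real_eq_range_eigenvalues ▸ hx
    exact hA.eigenvalues_pos i

/-- Under L²-regularized lazy training the output converges, as `t → ∞`, to
the smoothed solution `(Θ₀ + λI)⁻¹·(Θ₀·Y + λ·ŷ₀)` rather than to the labels. -/
theorem regularized_lazy_output_limit
    (N : ℕ) (hN : 1 ≤ N) (Θ : Matrix (Fin N) (Fin N) ℝ)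
    (hΘ : Θ.PosSemidef) (lam : ℝ) (hlam : 0 < lam)
    (Y y0 : Fin N → ℝ) (η : ℝ) (hη : 0 < η)
    (yhat : ℝ → Fin N → ℝ)
    (hyhat : ∀ t, yhat t =
      (exp ((-(η / N) * t) • (Θ + lam • (1 : Matrix (Fin N) (Fin N) ℝ)))).mulVec y0
        + ((1 : Matrix (Fin N) (Fin N) ℝ)
            - exp ((-(η / N) * t) • (Θ + lam • (1 : Matrix (Fin N) (Fin N) ℝ)))).mulVec
          ((Θ + lam • (1 : Matrix (Fin N) (Fin N) ℝ))⁻¹.mulVec (Θ.mulVec Y + lam • y0))) :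
    Tendsto yhat atTop
      (nhds ((Θ + lam • (1 : Matrix (Fin N) (Fin N) ℝ))⁻¹.mulVec
        (Θ.mulVec Y + lam • y0))) := by
  set A := Θ + lam • (1 : Matrix (Fin N) (Fin N) ℝ)
  have hA : A.PosDef := PosDef.posSemidef_add hΘ (.smul .one hlam)
  have hrate : Tendsto (fun t : ℝ => η / N * t) atTop atTop :=
    tendsto_id.const_mul_atTop (div_pos hη (by exact_mod_cast hN))
  have hdecay : Tendsto (fun t : ℝ => exp ((-(η / N) * t) • A)) atTop (𝓝 0) := by
    simpa only [neg_mul, Function.comp_def] using hA.tendsto_exp_neg_smul_atTop_zero.comp hrate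
  rw [funext hyhat]
  exact hdecay.mulVec_add_one_sub_mulVec y0 _
end
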